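/- Let R be a commutative ring, q ∈ R, A a commutative R-algebra, x ∈ A, and fix an integer p ≥ 1; set y := (1−q)x. Let B_{n,i} ∈ ℤ[t] be the divided p-Frobenius coefficients, i.e. the unique polynomials with (i)_t! · A_{n,i} = (n)_{t^p}! · (p)_t^n · B_{n,i}, where A_{n,i} := Σ_{j=0}^{n} (−1)^{n−j} t^{p(n−j)(n−j−1)/2} (n choose j)_{t^p} (pj choose i)_t. Then the A-linear map A⟨ω⟩_{q^p,(1−q)x^p} → A⟨ξ⟩_{q,y} sending ω^{[n]} ↦ Σ_{i=n}^{pn} B_{n,i}(q) x^{pn−i} ξ^{[i]} is a homomorphism of rings (the divided p-Frobenius map). -/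

import Mathlib

/-!
Coefficient by coefficient in the basis `ξ^{[k]}`, the identities
`u(ω^{[m]} ω^{[n]}) = u(ω^{[m]}) u(ω^{[n]})` are identities between integer polynomials in `q` and
`x`, so it suffices to prove them in the fraction field `K` of `ℤ[t, x]`. There the `q`-factorials are invertible and both twisted divided
power algebras have models in `K[X]`: `ξ^{[k]} = ∏_{j<k} (X - q^j x) / (k)_q!`, and `ω^{[n]}` is the
same expression for the parameters `q^p` and `x^p / (p)_q`. The substitution `X ↦ X^p / (p)_q` is a
ring endomorphism of `K[X]`, and by Gauss's `q`-binomial formula followed by the `q`-binomial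
expansion of each `X^{pj}` in twisted powers it sends the model of `ω^{[n]}` to
`∑ᵢ B_{n,i}(q) x^{pn-i} ξ^{[i]}`. Since `X - q^j` divides `X^p - q^{pj}`, the same expansion at
`x = 1` shows `B_{n,i} = 0` for `i < n`.
-/

def qInt {R : Type*} [CommRing R] (q : R) (m : ℕ) : R := ∑ i ∈ Finset.range m, q ^ i

def qFact {R : Type*} [CommRing R] (q : R) : ℕ → R
  | 0 => 1
  | n + 1 => qFact q n * qInt q (n + 1)

def qChoose {R : Type*} [CommRing R] (q : R) : ℕ → ℕ → R
  | _, 0 => 1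
  | 0, _ + 1 => 0
  | n + 1, k + 1 => qChoose q n k + q ^ (k + 1) * qChoose q n (k + 1)

def dpCoeff {A : Type*} [CommRing A] (q y : A) (m n i : ℕ) : A :=
  (-1 : A) ^ i * q ^ (i * (i - 1) / 2) * qChoose q (m + n - i) m * qChoose q m i * y ^ i

/-- The `p`-Frobenius coefficients
`A_{n,i} := Σ_{j=0}^{n} (−1)^{n−j} t^{p(n−j)(n−j−1)/2} (n choose j)_{t^p} (pj choose i)_t`
in `ℤ[t]`. -/
noncomputable def frobCoeff (p n i : ℕ) : Polynomial ℤ :=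
  ∑ j ∈ Finset.range (n + 1),
    (-1 : Polynomial ℤ) ^ (n - j) * Polynomial.X ^ (p * ((n - j) * (n - j - 1) / 2)) *
      qChoose ((Polynomial.X : Polynomial ℤ) ^ p) n j *
      qChoose (Polynomial.X : Polynomial ℤ) (p * j) i


open Polynomial Finset

section QAnalogues

variable {R S : Type*} [CommRing R] [CommRing S] (q : R)

lemma qInt_succ (m : ℕ) : qInt q (m + 1) = qInt q m + q ^ m := sum_range_succ _ _

lemma qInt_succ' (m : ℕ) : qInt q (m + 1) = 1 + q * qInt q m := by
  simp [qInt, sum_range_succ', pow_succ', mul_sum, add_comm]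

lemma qInt_add (a b : ℕ) : qInt q (a + b) = qInt q a + q ^ a * qInt q b := by
  simp [qInt, sum_range_add, pow_add, mul_sum]

lemma one_sub_mul_qInt (m : ℕ) : (1 - q) * qInt q m = 1 - q ^ m := by
  rw [qInt, mul_comm, ← neg_sub, mul_neg, geom_sum_mul, neg_sub]

lemma qFact_succ (n : ℕ) : qFact q (n + 1) = qFact q n * qInt q (n + 1) := rfl

@[simp] lemma qChoose_zero_right (n : ℕ) : qChoose q n 0 = 1 := by cases n <;> rfl

@[simp] lemma qChoose_zero_succ (k : ℕ) : qChoose q 0 (k + 1) = 0 := rfl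

lemma qChoose_succ_succ (n k : ℕ) :
    qChoose q (n + 1) (k + 1) = qChoose q n k + q ^ (k + 1) * qChoose q n (k + 1) := rfl

lemma qChoose_eq_zero_of_lt : ∀ {n k : ℕ}, n < k → qChoose q n k = 0
  | 0, _ + 1, _ => rfl
  | n + 1, k + 1, h => by
    rw [qChoose_succ_succ, qChoose_eq_zero_of_lt (by omega), qChoose_eq_zero_of_lt (by omega),
      mul_zero, add_zero]

@[simp] lemma qChoose_self (n : ℕ) : qChoose q n n = 1 := by
  induction n with
  | zero => rfl
  | succ n ih =>
    rw [qChoose_succ_succ, ih, qChoose_eq_zero_of_lt q n.lt_succ_self, mul_zero, add_zero]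

lemma qChoose_one_right (n : ℕ) : qChoose q n 1 = qInt q n := by
  induction n with
  | zero => rfl
  | succ n ih => rw [qChoose_succ_succ, ih, qChoose_zero_right, pow_one, qInt_succ']

/-- The second `q`-Pascal rule `[n+1, k+1] = [n, k+1] + q^(n-k) [n, k]`, multiplied by `q^k` to
avoid the truncated subtraction. -/
lemma pow_mul_qChoose_succ_succ : ∀ n k : ℕ,
    q ^ k * qChoose q (n + 1) (k + 1) = q ^ k * qChoose q n (k + 1) + q ^ n * qChoose q n k
  | 0, 0 => by simp
  | 0, k + 1 => by simp [qChoose_succ_succ]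
  | n + 1, 0 => by
    simp only [pow_zero, one_mul, zero_add, qChoose_one_right, qChoose_zero_right, mul_one]
    exact qInt_succ q (n + 1)
  | n + 1, k + 1 => by
    have h₁ := pow_mul_qChoose_succ_succ n k
    have h₂ := pow_mul_qChoose_succ_succ n (k + 1)
    simp only [qChoose_succ_succ] at h₁ h₂ ⊢
    linear_combination q * h₁ + q ^ (k + 2) * h₂

lemma qChoose_mul_qFact_mul_qFact : ∀ m k : ℕ,
    qChoose q (m + k) m * (qFact q m * qFact q k) = qFact q (m + k)
  | 0, k => by simp [qFact]
  | m + 1, 0 => by simp [qFact]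
  | m + 1, k + 1 => by
    have h₁ := qChoose_mul_qFact_mul_qFact m (k + 1)
    have h₂ := qChoose_mul_qFact_mul_qFact (m + 1) k
    rw [show m + (k + 1) = m + 1 + k by omega] at h₁
    rw [show m + 1 + (k + 1) = m + 1 + k + 1 by omega, qChoose_succ_succ, qFact_succ q (m + 1 + k),
      show m + 1 + k + 1 = (m + 1) + (k + 1) by omega, qInt_add]
    simp only [qFact_succ] at h₁ h₂ ⊢
    linear_combination qInt q (m + 1) * h₁ + q ^ (m + 1) * qInt q (k + 1) * h₂

lemma map_qInt (f : R →+* S) (m : ℕ) : f (qInt q m) = qInt (f q) m := by simp [qInt]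

lemma map_qFact (f : R →+* S) (m : ℕ) : f (qFact q m) = qFact (f q) m := by
  induction m with
  | zero => simp [qFact]
  | succ m ih => rw [qFact_succ, map_mul, ih, map_qInt, qFact_succ]

lemma map_qChoose (f : R →+* S) : ∀ n k : ℕ, f (qChoose q n k) = qChoose (f q) n k
  | _, 0 => by simp
  | 0, _ + 1 => by simp [qChoose]
  | n + 1, k + 1 => by simp [qChoose_succ_succ, map_qChoose f n]

lemma map_dpCoeff (f : R →+* S) (y : R) (m n i : ℕ) :
    f (dpCoeff q y m n i) = dpCoeff (f q) (f y) m n i := by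
  simp [dpCoeff, map_qChoose]

lemma dpCoeff_eq_zero_of_lt (y : R) {m n i : ℕ} (h : m < i) : dpCoeff q y m n i = 0 := by
  simp [dpCoeff, qChoose_eq_zero_of_lt q h]

lemma qInt_one (m : ℕ) : qInt (1 : R) m = m := by simp [qInt]

lemma qFact_one (k : ℕ) : qFact (1 : R) k = k.factorial := by
  induction k with
  | zero => simp [qFact]
  | succ k ih => simp [qFact_succ, ih, qInt_one, Nat.factorial_succ, mul_comm]

end QAnalogues

section TwistedPow

variable {R S : Type*} [CommRing R] [CommRing S]

def twistedPow (q s u : R) (n : ℕ) : R := ∏ j ∈ range n, (u - q ^ j * s)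

variable (q s u : R)

@[simp] lemma twistedPow_zero : twistedPow q s u 0 = 1 := prod_range_zero _

lemma twistedPow_succ (n : ℕ) : twistedPow q s u (n + 1) = twistedPow q s u n * (u - q ^ n * s) :=
  prod_range_succ _ _

lemma map_twistedPow (f : R →+* S) (n : ℕ) :
    f (twistedPow q s u n) = twistedPow (f q) (f s) (f u) n := by
  simp [twistedPow]

lemma twistedPow_mul_mul (c : R) (n : ℕ) :
    twistedPow q (c * s) (c * u) n = c ^ n * twistedPow q s u n := by
  calc ∏ j ∈ range n, (c * u - q ^ j * (c * s)) = ∏ j ∈ range n, (c * (u - q ^ j * s)) :=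
        prod_congr rfl fun _ _ => by ring
    _ = c ^ n * twistedPow q s u n := by rw [prod_mul_distrib, prod_const, card_range, twistedPow]

lemma twistedPow_dvd_twistedPow {m n : ℕ} (h : m ≤ n) : twistedPow q s u m ∣ twistedPow q s u n :=
  prod_dvd_prod_of_subset _ _ _ (range_subset_range.2 h)

lemma twistedPow_dvd_twistedPow_pow (p n : ℕ) :
    twistedPow q s u n ∣ twistedPow (q ^ p) (s ^ p) (u ^ p) n :=
  prod_dvd_prod_of_dvd _ _ fun j _ => by
    simpa only [mul_pow, ← pow_mul, mul_comm j p] using sub_dvd_pow_sub_pow u (q ^ j * s) p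

lemma pow_eq_sum_antidiagonal_twistedPow (m : ℕ) :
    u ^ m = ∑ ie ∈ antidiagonal m, qChoose q m ie.1 * s ^ ie.2 * twistedPow q s u ie.1 := by
  induction m with
  | zero => simp
  | succ m ih =>
    set h : ℕ × ℕ → R := fun ie => q ^ ie.1 * qChoose q m ie.1 * s ^ ie.2 * twistedPow q s u ie.1
    have h₁ : ∑ ie ∈ antidiagonal m, h (ie.1, ie.2 + 1) = ∑ ie ∈ antidiagonal (m + 1), h ie := by
      simp [Nat.sum_antidiagonal_succ', h, qChoose_eq_zero_of_lt q m.lt_succ_self]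
    have h₂ : s ^ (m + 1) + ∑ ie ∈ antidiagonal m, h (ie.1 + 1, ie.2) =
        ∑ ie ∈ antidiagonal (m + 1), h ie := by
      simp [Nat.sum_antidiagonal_succ, h]
    rw [Nat.sum_antidiagonal_succ, pow_succ', ih, mul_sum]
    simp only [qChoose_succ_succ, add_mul, sum_add_distrib]
    have h₃ : ∀ ie : ℕ × ℕ, u * (qChoose q m ie.1 * s ^ ie.2 * twistedPow q s u ie.1) =
        qChoose q m ie.1 * s ^ ie.2 * twistedPow q s u (ie.1 + 1) + h (ie.1, ie.2 + 1) := by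
      intro ie
      simp only [h, twistedPow_succ]
      ring
    rw [sum_congr rfl fun ie _ => h₃ ie, sum_add_distrib, h₁, ← h₂]
    simp only [h, qChoose_zero_right, twistedPow_zero]
    ring

lemma pow_eq_sum_range_twistedPow {m N : ℕ} (h : m < N) :
    u ^ m = ∑ i ∈ range N, qChoose q m i * s ^ (m - i) * twistedPow q s u i := by
  rw [pow_eq_sum_antidiagonal_twistedPow, Nat.sum_antidiagonal_eq_sum_range_succ_mk]
  exact sum_subset (range_subset_range.2 h) fun i _ hi => by
    simp [qChoose_eq_zero_of_lt q (show m < i by simpa using hi)]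

lemma twistedPow_eq_sum_antidiagonal (n : ℕ) :
    twistedPow q s u n = ∑ je ∈ antidiagonal n,
      (-1) ^ je.2 * q ^ (je.2 * (je.2 - 1) / 2) * qChoose q n je.1 * s ^ je.2 * u ^ je.1 := by
  induction n with
  | zero => simp
  | succ n ih =>
    set h : ℕ × ℕ → R := fun je =>
      (-1) ^ je.2 * q ^ (je.2 * (je.2 - 1) / 2 + je.1) * qChoose q n je.1 * s ^ je.2 * u ^ je.1
    have h₁ : ∑ je ∈ antidiagonal n, h (je.1, je.2 + 1) = ∑ je ∈ antidiagonal (n + 1), h je := by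
      simp [Nat.sum_antidiagonal_succ', h, qChoose_eq_zero_of_lt q n.lt_succ_self]
    have h₂ : h (0, n + 1) + ∑ je ∈ antidiagonal n, h (je.1 + 1, je.2) =
        ∑ je ∈ antidiagonal (n + 1), h je := by
      simp [Nat.sum_antidiagonal_succ, h]
    have h₃ : ∀ je ∈ antidiagonal n,
        (-1) ^ je.2 * q ^ (je.2 * (je.2 - 1) / 2) * qChoose q n je.1 * s ^ je.2 * u ^ je.1 *
          (u - q ^ n * s) =
        (-1) ^ je.2 * q ^ (je.2 * (je.2 - 1) / 2) * qChoose q n je.1 * s ^ je.2 * u ^ (je.1 + 1)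
          + h (je.1, je.2 + 1) := by
      intro je hje
      rw [show q ^ n = q ^ je.1 * q ^ je.2 by rw [← pow_add, mem_antidiagonal.1 hje]]
      simp only [h, Nat.triangle_succ]
      ring
    have h₄ : ∀ je : ℕ × ℕ,
        (-1) ^ je.2 * q ^ (je.2 * (je.2 - 1) / 2) * qChoose q (n + 1) (je.1 + 1) * s ^ je.2 *
          u ^ (je.1 + 1) =
        (-1) ^ je.2 * q ^ (je.2 * (je.2 - 1) / 2) * qChoose q n je.1 * s ^ je.2 * u ^ (je.1 + 1)
          + h (je.1 + 1, je.2) := by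
      intro je
      simp only [h, qChoose_succ_succ]
      ring
    rw [Nat.sum_antidiagonal_succ, twistedPow_succ, ih, sum_mul, sum_congr rfl h₃,
      sum_add_distrib, h₁, ← h₂, sum_congr rfl fun je _ => h₄ je, sum_add_distrib]
    simp only [h, qChoose_zero_right]
    ring

end TwistedPow

section TwistedPowMul

variable {R S : Type*} [CommRing R] [CommRing S] (q s u : R)

def twistedPowMulCoeff (m n i : ℕ) : R :=
  (-1) ^ i * q ^ (i * (i - 1) / 2) * qChoose q m i * (∏ j ∈ range i, (1 - q ^ (n - j))) * s ^ i

lemma map_twistedPowMulCoeff (f : R →+* S) (m n i : ℕ) :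
    f (twistedPowMulCoeff q s m n i) = twistedPowMulCoeff (f q) (f s) m n i := by
  simp [twistedPowMulCoeff, map_qChoose]

lemma twistedPowMulCoeff_succ_succ (m n i : ℕ) :
    twistedPowMulCoeff q s (m + 1) n (i + 1) = twistedPowMulCoeff q s m n (i + 1) +
      twistedPowMulCoeff q s m n i * (q ^ m * (q ^ (n - i) - 1) * s) := by
  simp only [twistedPowMulCoeff, prod_range_succ, Nat.triangle_succ, pow_add]
  linear_combination (-1) ^ (i + 1) * q ^ (i * (i - 1) / 2) * (∏ j ∈ range i, (1 - q ^ (n - j))) *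
    (1 - q ^ (n - i)) * s ^ (i + 1) * pow_mul_qChoose_succ_succ q m i

lemma twistedPow_mul (m n : ℕ) : twistedPow q s u m * twistedPow q s u n =
    ∑ i ∈ range (n + 1), twistedPowMulCoeff q s m n i * twistedPow q s u (m + n - i) := by
  induction m with
  | zero => simp [sum_range_succ', twistedPowMulCoeff]
  | succ m ih =>
    set k : ℕ → R := fun i =>
      twistedPowMulCoeff q s m n i * (q ^ m * (q ^ (n - i) - 1) * s) * twistedPow q s u (m + n - i)
    have h₁ : ∀ i ∈ range (n + 1),
        twistedPowMulCoeff q s m n i * twistedPow q s u (m + n - i) * (u - q ^ m * s) =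
          twistedPowMulCoeff q s m n i * twistedPow q s u (m + 1 + n - i) + k i := by
      intro i hi
      have hin : i ≤ n := Nat.lt_succ_iff.1 (mem_range.1 hi)
      simp only [k]
      rw [show m + 1 + n - i = m + n - i + 1 by omega, twistedPow_succ,
        show m + n - i = m + (n - i) by omega, pow_add]
      ring
    have h₂ : ∑ i ∈ range (n + 1), k i = ∑ i ∈ range n, k i := by simp [sum_range_succ, k]
    have h₃ : ∀ i ∈ range n, twistedPowMulCoeff q s (m + 1) n (i + 1) *
        twistedPow q s u (m + 1 + n - (i + 1)) =
        twistedPowMulCoeff q s m n (i + 1) * twistedPow q s u (m + 1 + n - (i + 1)) + k i := by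
      intro i _
      rw [twistedPowMulCoeff_succ_succ, show m + 1 + n - (i + 1) = m + n - i by omega]
      ring
    rw [twistedPow_succ, mul_right_comm, ih, sum_mul, sum_congr rfl h₁, sum_add_distrib, h₂,
      sum_range_succ', sum_range_succ' _ n, sum_congr rfl h₃, sum_add_distrib]
    simp [twistedPowMulCoeff]
    ring

lemma prod_one_sub_pow_mul_qFact {n i : ℕ} (h : i ≤ n) :
    (∏ j ∈ range i, (1 - q ^ (n - j))) * qFact q (n - i) = (1 - q) ^ i * qFact q n := by
  induction i with
  | zero => simp
  | succ i ih =>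
    have hf : qFact q (n - i) = qFact q (n - (i + 1)) * qInt q (n - i) := by
      obtain ⟨d, hd⟩ : ∃ d, n - i = d + 1 := ⟨n - (i + 1), by omega⟩
      rw [hd, qFact_succ, show n - (i + 1) = d by omega]
    rw [hf] at ih
    rw [prod_range_succ, pow_succ, ← one_sub_mul_qInt]
    linear_combination (1 - q) * ih (by omega)

lemma twistedPowMulCoeff_mul_qFact {m n i : ℕ} (h : i ≤ n) :
    twistedPowMulCoeff q s m n i * qFact q (m + n - i) =
      dpCoeff q ((1 - q) * s) m n i * (qFact q m * qFact q n) := by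
  have h₁ := qChoose_mul_qFact_mul_qFact q m (n - i)
  rw [show m + (n - i) = m + n - i by omega] at h₁
  have h₂ := prod_one_sub_pow_mul_qFact q h
  simp only [twistedPowMulCoeff, dpCoeff, mul_pow]
  linear_combination
    (-(-1) ^ i * q ^ (i * (i - 1) / 2) * qChoose q m i * (∏ j ∈ range i, (1 - q ^ (n - j))) *
      s ^ i) * h₁ +
    ((-1) ^ i * q ^ (i * (i - 1) / 2) * qChoose q m i * s ^ i * qChoose q (m + n - i) m *
      qFact q m) * h₂

end TwistedPowMul

section TwistedPowBasis

variable {S : Type*} [CommRing S] (q x : S)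

lemma twistedPow_C_eq_prod (k : ℕ) :
    twistedPow (C q) (C x) (X : S[X]) k = ∏ j ∈ range k, (X - C (q ^ j * x)) := by
  simp [twistedPow, C_mul, C_pow]

lemma monic_twistedPow (k : ℕ) : (twistedPow (C q) (C x) (X : S[X]) k).Monic := by
  rw [twistedPow_C_eq_prod]
  exact monic_prod_of_monic _ _ fun j _ => monic_X_sub_C _

lemma degree_twistedPow [Nontrivial S] (k : ℕ) :
    (twistedPow (C q) (C x) (X : S[X]) k).degree = k := by
  rw [degree_eq_natDegree (monic_twistedPow q x k).ne_zero, twistedPow_C_eq_prod,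
    natDegree_finsetProd_X_sub_C_eq_card, card_range]

noncomputable def twistedPowSeq [Nontrivial S] : Polynomial.Sequence S where
  elems' k := twistedPow (C q) (C x) X k
  degree_eq' := degree_twistedPow q x

variable [IsDomain S]

lemma eq_zero_of_sum_smul_twistedPow_eq_zero {N : ℕ} {c : ℕ → S}
    (h : ∑ i ∈ range N, c i • twistedPow (C q) (C x) (X : S[X]) i = 0) : ∀ i < N, c i = 0 :=
  fun i hi => linearIndependent_iff'.1 (twistedPowSeq q x).linearIndependent (range N) c h i
    (mem_range.2 hi)

lemma eq_zero_of_twistedPow_dvd_sum {a N : ℕ} (haN : a ≤ N) {c : ℕ → S}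
    (h : twistedPow (C q) (C x) X a ∣ ∑ i ∈ range N, c i • twistedPow (C q) (C x) (X : S[X]) i) :
    ∀ i < a, c i = 0 := by
  rw [← sum_range_add_sum_Ico _ haN] at h
  have hhigh : twistedPow (C q) (C x) X a ∣
      ∑ i ∈ Ico a N, c i • twistedPow (C q) (C x) (X : S[X]) i :=
    dvd_sum fun i hi => by
      rw [smul_eq_C_mul]
      exact dvd_mul_of_dvd_right (twistedPow_dvd_twistedPow _ _ _ (mem_Ico.1 hi).1) _
  have hlow : ∑ i ∈ range a, c i • twistedPow (C q) (C x) (X : S[X]) i ∈ degreeLT S a :=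
    Submodule.sum_mem _ fun i hi => mem_degreeLT.2 <|
      (degree_smul_le _ _).trans_lt (by rw [degree_twistedPow]; exact_mod_cast mem_range.1 hi)
  refine eq_zero_of_sum_smul_twistedPow_eq_zero q x
    (eq_zero_of_dvd_of_degree_lt ((dvd_add_left hhigh).1 h) ?_)
  rw [degree_twistedPow]
  exact mem_degreeLT.1 hlow

end TwistedPowBasis

section Frobenius

variable {S : Type*} [CommRing S] (q : S)

lemma aeval_qInt (r : ℤ[X]) (m : ℕ) : aeval q (qInt r m) = qInt (aeval q r) m :=
  map_qInt r (aeval q).toRingHom m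

lemma aeval_qFact (r : ℤ[X]) (m : ℕ) : aeval q (qFact r m) = qFact (aeval q r) m :=
  map_qFact r (aeval q).toRingHom m

lemma aeval_qChoose (r : ℤ[X]) (n k : ℕ) : aeval q (qChoose r n k) = qChoose (aeval q r) n k :=
  map_qChoose r (aeval q).toRingHom n k

lemma map_aeval {S T : Type*} [CommRing S] [CommRing T] (f : S →+* T) (q : S) (g : ℤ[X]) :
    f (aeval q g) = aeval (f q) g := by
  induction g using Polynomial.induction_on <;> simp_all

lemma aeval_ringHom_X {T : Type*} [CommRing T] (f : ℤ[X] →+* T) (g : ℤ[X]) :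
    aeval (f X) g = f g := by
  induction g using Polynomial.induction_on <;> simp_all

/-- Gauss's `q`-binomial formula in `U ^ p`, then the expansion of each `U ^ (p j)` in twisted
powers. -/
lemma twistedPow_pow_eq_sum_frobCoeff (x U : S) (p a : ℕ) {N : ℕ} (hN : p * a < N) :
    twistedPow (q ^ p) (x ^ p) (U ^ p) a =
      ∑ i ∈ range N, aeval q (frobCoeff p a i) * x ^ (p * a - i) * twistedPow q x U i := by
  have hU : ∀ j ∈ range (a + 1), (U ^ p) ^ j =
      ∑ i ∈ range N, qChoose q (p * j) i * x ^ (p * j - i) * twistedPow q x U i := by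
    intro j hj
    rw [← pow_mul]
    exact pow_eq_sum_range_twistedPow q x U
      ((Nat.mul_le_mul_left p (Nat.lt_succ_iff.1 (mem_range.1 hj))).trans_lt hN)
  rw [twistedPow_eq_sum_antidiagonal, Nat.sum_antidiagonal_eq_sum_range_succ_mk,
    sum_congr rfl fun j hj => by rw [hU j hj]]
  simp only [mul_sum]
  rw [sum_comm]
  refine sum_congr rfl fun i _ => ?_
  rw [frobCoeff, map_sum, sum_mul, sum_mul]
  refine sum_congr rfl fun j hj => ?_
  have hja : j ≤ a := Nat.lt_succ_iff.1 (mem_range.1 hj)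
  simp only [map_mul, map_pow, map_neg, map_one, aeval_X, aeval_qChoose, pow_mul]
  rcases le_or_gt i (p * j) with hij | hij
  · have hx : (x ^ p) ^ (a - j) * x ^ (p * j - i) = x ^ (p * a - i) := by
      rw [← pow_mul, ← pow_add]
      congr 1
      have := Nat.mul_le_mul_left p hja
      rw [Nat.mul_sub]
      omega
    rw [← hx]
    ring
  · simp [qChoose_eq_zero_of_lt q hij]

/-- `∏_{j<a} (X - t^j)` divides `∏_{j<a} (X^p - t^{pj})`, whose coefficients in the independent
twisted powers `∏_{j<i} (X - t^j)` are the `A_{a,i}`. -/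
lemma frobCoeff_eq_zero_of_lt {p a i : ℕ} (hp : 0 < p) (h : i < a) : frobCoeff p a i = 0 := by
  have hdvd := twistedPow_dvd_twistedPow_pow (C X : ℤ[X][X]) (C 1) X p a
  rw [twistedPow_pow_eq_sum_frobCoeff _ _ _ _ _ (Nat.lt_succ_self _)] at hdvd
  simp only [aeval_ringHom_X C, ← C_pow, one_pow, ← C_mul, mul_one] at hdvd
  simp only [← smul_eq_C_mul] at hdvd
  exact eq_zero_of_twistedPow_dvd_sum X 1 (Nat.le_succ_of_le (Nat.le_mul_of_pos_left a hp)) hdvd i h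

lemma frobCoeff_eq_zero_of_gt {p a i : ℕ} (h : p * a < i) : frobCoeff p a i = 0 :=
  sum_eq_zero fun j hj => by
    rw [qChoose_eq_zero_of_lt X
      ((Nat.mul_le_mul_left p (Nat.lt_succ_iff.1 (mem_range.1 hj))).trans_lt h), mul_zero]

end Frobenius

lemma qFact_X_pow_ne_zero (p k : ℕ) : qFact ((X : ℤ[X]) ^ p) k ≠ 0 := fun h => by
  have := map_qFact ((X : ℤ[X]) ^ p) (evalRingHom 1) k
  simp only [h, map_zero, coe_evalRingHom, eval_pow, eval_X, one_pow, qFact_one] at this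
  exact k.factorial_ne_zero (by exact_mod_cast this.symm)

lemma qInt_X_ne_zero {p : ℕ} (hp : 0 < p) : qInt (X : ℤ[X]) p ≠ 0 := fun h => by
  have := map_qInt (X : ℤ[X]) (evalRingHom 1) p
  simp only [h, map_zero, coe_evalRingHom, eval_X, qInt_one] at this
  exact hp.ne' (by exact_mod_cast this.symm)

lemma qFact_map_X_pow_ne_zero {T : Type*} [CommRing T] {f : ℤ[X] →+* T}
    (hf : Function.Injective f) (p k : ℕ) : qFact (f X ^ p) k ≠ 0 := by
  rw [← map_pow, ← map_qFact]
  exact (map_ne_zero_iff f hf).2 (qFact_X_pow_ne_zero p k)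

lemma qInt_map_X_ne_zero {T : Type*} [CommRing T] {f : ℤ[X] →+* T} {p : ℕ}
    (hf : Function.Injective f) (hp : 0 < p) : qInt (f X) p ≠ 0 := by
  rw [← map_qInt]
  exact (map_ne_zero_iff f hf).2 (qInt_X_ne_zero hp)

def IsDivFrobCoeff (p : ℕ) (Bc : ℕ → ℕ → ℤ[X]) : Prop :=
  ∀ n i, qFact X i * frobCoeff p n i = qFact (X ^ p) n * qInt X p ^ n * Bc n i

namespace IsDivFrobCoeff

variable {p : ℕ} {Bc : ℕ → ℕ → ℤ[X]}

lemma eq_zero_of_frobCoeff_eq_zero (hB : IsDivFrobCoeff p Bc) (hp : 0 < p) {n i : ℕ}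
    (h : frobCoeff p n i = 0) : Bc n i = 0 := by
  have := hB n i
  rw [h, mul_zero, eq_comm] at this
  exact (mul_eq_zero.1 this).resolve_left
    (mul_ne_zero (qFact_X_pow_ne_zero p n) (pow_ne_zero _ (qInt_X_ne_zero hp)))

lemma eq_zero_of_lt (hB : IsDivFrobCoeff p Bc) (hp : 0 < p) {n i : ℕ} (h : i < n) : Bc n i = 0 :=
  hB.eq_zero_of_frobCoeff_eq_zero hp (frobCoeff_eq_zero_of_lt hp h)

lemma eq_zero_of_gt (hB : IsDivFrobCoeff p Bc) (hp : 0 < p) {n i : ℕ} (h : p * n < i) :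
    Bc n i = 0 :=
  hB.eq_zero_of_frobCoeff_eq_zero hp (frobCoeff_eq_zero_of_gt h)

lemma zero_zero (hB : IsDivFrobCoeff p Bc) : Bc 0 0 = 1 := by
  simpa [frobCoeff, qFact] using (hB 0 0).symm

lemma aeval_eq {S : Type*} [CommRing S] (hB : IsDivFrobCoeff p Bc) (q : S) (n i : ℕ) :
    qFact q i * aeval q (frobCoeff p n i) = qFact (q ^ p) n * qInt q p ^ n * aeval q (Bc n i) := by
  simpa [aeval_qFact, aeval_qInt] using congrArg (aeval q) (hB n i)

end IsDivFrobCoeff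

/-- The coefficient of `ξ^{[i]}` in the image of `ω^{[n]}`. -/
noncomputable def divFrobEntry {A : Type*} [CommRing A] (p : ℕ) (Bc : ℕ → ℕ → ℤ[X]) (q x : A)
    (n i : ℕ) : A :=
  aeval q (Bc n i) * x ^ (p * n - i)

lemma map_divFrobEntry {A A' : Type*} [CommRing A] [CommRing A'] (f : A →+* A') (p : ℕ)
    (Bc : ℕ → ℕ → ℤ[X]) (q x : A) (n i : ℕ) :
    f (divFrobEntry p Bc q x n i) = divFrobEntry p Bc (f q) (f x) n i := by
  simp [divFrobEntry, map_aeval]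

lemma divFrobEntry_eq_zero_of_gt {A : Type*} [CommRing A] {p : ℕ} {Bc : ℕ → ℕ → ℤ[X]}
    (hB : IsDivFrobCoeff p Bc) (hp : 0 < p)
    (q x : A) {a k : ℕ} (h : p * a < k) : divFrobEntry p Bc q x a k = 0 := by
  simp [divFrobEntry, hB.eq_zero_of_gt hp h]

section Model

variable {K : Type*} [Field K]

/-- When the `q`-factorials are invertible, a model of `ξ^{[k]}` in `K⟨ξ⟩_{q,(1-q)x}`. -/
noncomputable def dpModel (q x : K) (k : ℕ) : K[X] := (qFact q k)⁻¹ • twistedPow (C q) (C x) X k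

lemma dpModel_mul (q x : K) (hq : ∀ k, qFact q k ≠ 0) (m n : ℕ) :
    dpModel q x m * dpModel q x n = ∑ i ∈ range (min m n + 1),
      dpCoeff q ((1 - q) * x) m n i • dpModel q x (m + n - i) := by
  have hcoeff : ∀ i ≤ n, (qFact q m)⁻¹ * (qFact q n)⁻¹ * twistedPowMulCoeff q x m n i =
      dpCoeff q ((1 - q) * x) m n i * (qFact q (m + n - i))⁻¹ := by
    intro i hi
    have := twistedPowMulCoeff_mul_qFact q x (m := m) hi
    field_simp [hq]
    linear_combination this
  calc dpModel q x m * dpModel q x n = ((qFact q m)⁻¹ * (qFact q n)⁻¹) •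
        (twistedPow (C q) (C x) X m * twistedPow (C q) (C x) X n) := by
        rw [dpModel, dpModel, smul_mul_smul_comm]
    _ = ∑ i ∈ range (n + 1), dpCoeff q ((1 - q) * x) m n i • dpModel q x (m + n - i) := by
        rw [twistedPow_mul, smul_sum]
        refine sum_congr rfl fun i hi => ?_
        rw [← map_twistedPowMulCoeff, ← smul_eq_C_mul, smul_smul,
          hcoeff i (Nat.lt_succ_iff.1 (mem_range.1 hi)), dpModel, mul_smul]
    _ = _ := (sum_subset (range_subset_range.2 (by omega)) fun i hi hi' => by
        rw [dpCoeff_eq_zero_of_lt q _ (by simp at hi hi'; omega), zero_smul]).symm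

lemma eq_zero_of_sum_smul_dpModel_eq_zero {K : Type*} [Field K] {q x : K}
    (hq : ∀ k, qFact q k ≠ 0) {N : ℕ} {c : ℕ → K}
    (h : ∑ k ∈ range N, c k • dpModel q x k = 0) : ∀ k < N, c k = 0 := by
  simp only [dpModel, smul_smul] at h
  exact fun k hk => by
    simpa [hq k] using eq_zero_of_sum_smul_twistedPow_eq_zero q x h k hk

lemma aeval_dpModel_frob (q x : K) {p : ℕ} {Bc : ℕ → ℕ → ℤ[X]} (hB : IsDivFrobCoeff p Bc)
    (hq : ∀ k, qFact q k ≠ 0) (hp : qInt q p ≠ 0) {a : ℕ} (ha : qFact (q ^ p) a ≠ 0) :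
    aeval (C (qInt q p)⁻¹ * X ^ p) (dpModel (q ^ p) (x ^ p / qInt q p) a) =
      ∑ k ∈ range (p * a + 1), divFrobEntry p Bc q x a k • dpModel q x k := by
  set c := (qInt q p)⁻¹
  have hT : aeval (C c * X ^ p) (twistedPow (C (q ^ p)) (C (x ^ p / qInt q p)) X a) =
      C c ^ a * twistedPow (C q ^ p) (C x ^ p) (X ^ p) a := by
    have := map_twistedPow (C (q ^ p)) (C (x ^ p / qInt q p)) X (aeval (C c * X ^ p)).toRingHom a
    simp only [AlgHom.toRingHom_eq_coe, RingHom.coe_coe, aeval_C, algebraMap_eq, aeval_X] at this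
    rw [this, div_eq_inv_mul, C_mul, C_pow, C_pow, twistedPow_mul_mul]
  have key : ∀ k, (qFact (q ^ p) a)⁻¹ * (c ^ a * (aeval q (frobCoeff p a k) * x ^ (p * a - k))) =
      divFrobEntry p Bc q x a k * (qFact q k)⁻¹ := by
    intro k
    have := hB.aeval_eq q a k
    have hk := hq k
    simp only [divFrobEntry, c, inv_pow]
    field_simp
    linear_combination x ^ (p * a - k) * this
  rw [dpModel, map_smul, hT, twistedPow_pow_eq_sum_frobCoeff (C q) (C x) X p a (Nat.lt_succ_self _),
    mul_sum, smul_sum]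
  refine sum_congr rfl fun k _ => ?_
  rw [dpModel, smul_smul, ← key, ← map_aeval, smul_eq_C_mul, smul_eq_C_mul]
  simp only [C_mul, C_pow]
  ring

end Model

section DividedPowerAlgebra

variable {A A' B : Type*} [CommRing A] [CommRing A'] [CommRing B] [Algebra A B]

def dpMulCoeff (q y : A) (i j k : ℕ) : A :=
  ∑ r ∈ range (min i j + 1), if i + j - r = k then dpCoeff q y i j r else 0

lemma map_dpMulCoeff (f : A →+* A') (q y : A) (i j k : ℕ) :
    f (dpMulCoeff q y i j k) = dpMulCoeff (f q) (f y) i j k := by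
  simp [dpMulCoeff, map_dpCoeff, apply_ite f]

lemma mul_eq_sum_dpMulCoeff_smul {q y : A} {b : ℕ → B}
    (hb : ∀ m n, b m * b n = ∑ r ∈ range (min m n + 1), dpCoeff q y m n r • b (m + n - r))
    {i j N : ℕ} (h : i + j < N) : b i * b j = ∑ k ∈ range N, dpMulCoeff q y i j k • b k := by
  simp only [hb, dpMulCoeff, sum_smul, ite_smul, zero_smul]
  rw [sum_comm]
  exact sum_congr rfl fun r _ => by rw [sum_ite_eq, if_pos (mem_range.2 (by omega))]

variable (q y : A) (p : ℕ) (α : ℕ → ℕ → A)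

/-- If a linear map `φ` sends `ω^{[a]}` to `∑ₖ α a k • ξ^{[k]}`, then `mapMulCoeff` and
`mulMapCoeff` are the coefficients of `ξ^{[k]}` in `φ (ω^{[m]} ω^{[n]})` and in
`φ ω^{[m]} * φ ω^{[n]}`, the parameters being those of the source and of the target. -/
def mapMulCoeff (m n k : ℕ) : A :=
  ∑ r ∈ range (min m n + 1), dpCoeff q y m n r * α (m + n - r) k

def mulMapCoeff (m n k : ℕ) : A :=
  ∑ i ∈ range (p * m + 1), ∑ j ∈ range (p * n + 1), α m i * α n j * dpMulCoeff q y i j k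

lemma map_mapMulCoeff (f : A →+* A') (m n k : ℕ) :
    f (mapMulCoeff q y α m n k) = mapMulCoeff (f q) (f y) (fun a i => f (α a i)) m n k := by
  simp [mapMulCoeff, map_dpCoeff]

lemma map_mulMapCoeff (f : A →+* A') (m n k : ℕ) :
    f (mulMapCoeff q y p α m n k) = mulMapCoeff (f q) (f y) p (fun a i => f (α a i)) m n k := by
  simp [mulMapCoeff, map_dpMulCoeff]

lemma sum_dpCoeff_smul_sum_eq {M : Type*} [AddCommGroup M] [Module A M] (b : ℕ → M)
    (hα : ∀ a k, p * a < k → α a k = 0) (m n : ℕ) :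
    ∑ r ∈ range (min m n + 1),
        dpCoeff q y m n r • ∑ k ∈ range (p * (m + n - r) + 1), α (m + n - r) k • b k =
      ∑ k ∈ range (p * (m + n) + 1), mapMulCoeff q y α m n k • b k := by
  have hext : ∀ r ∈ range (min m n + 1),
      ∑ k ∈ range (p * (m + n - r) + 1), α (m + n - r) k • b k =
        ∑ k ∈ range (p * (m + n) + 1), α (m + n - r) k • b k := fun r _ =>
    sum_subset (range_subset_range.2 (by gcongr; omega)) fun k _ hk => by
      rw [hα _ _ (by simpa using hk), zero_smul]
  rw [sum_congr rfl fun r hr => by rw [hext r hr]]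
  simp only [smul_sum, smul_smul, mapMulCoeff, sum_smul]
  exact sum_comm

lemma sum_smul_mul_sum_smul {b : ℕ → B}
    (hb : ∀ m n, b m * b n = ∑ r ∈ range (min m n + 1), dpCoeff q y m n r • b (m + n - r))
    (m n : ℕ) :
    (∑ i ∈ range (p * m + 1), α m i • b i) * (∑ j ∈ range (p * n + 1), α n j • b j) =
      ∑ k ∈ range (p * (m + n) + 1), mulMapCoeff q y p α m n k • b k := by
  rw [sum_mul_sum]
  have hprod : ∀ i ∈ range (p * m + 1), ∀ j ∈ range (p * n + 1), α m i • b i * α n j • b j =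
      ∑ k ∈ range (p * (m + n) + 1), (α m i * α n j * dpMulCoeff q y i j k) • b k := by
    intro i hi j hj
    simp only [mem_range] at hi hj
    rw [smul_mul_smul_comm, mul_eq_sum_dpMulCoeff_smul hb (N := p * (m + n) + 1) (by nlinarith),
      smul_sum]
    simp only [smul_smul]
  simp only [sum_congr rfl fun i hi => sum_congr rfl (hprod i hi), mulMapCoeff, sum_smul]
  symm
  rw [sum_comm]
  exact sum_congr rfl fun i _ => sum_comm

end DividedPowerAlgebra

section Basis

variable {ι A B C : Type*} [CommRing A] [CommRing B] [Algebra A B] [CommRing C] [Algebra A C]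

lemma eq_one_of_mul_basis (b : Module.Basis ι A B) {e : B} (h : ∀ i, e * b i = b i) : e = 1 := by
  have : LinearMap.mulLeft A e = LinearMap.id := b.ext fun i => by simpa using h i
  simpa using LinearMap.congr_fun this 1

lemma basis_zero_eq_one_of_dpCoeff (b : Module.Basis ℕ A B) (q y : A)
    (hb : ∀ m n, b m * b n = ∑ i ∈ range (min m n + 1), dpCoeff q y m n i • b (m + n - i)) :
    b 0 = 1 :=
  eq_one_of_mul_basis b fun n => by simp [hb, dpCoeff]

lemma map_mul_of_basis (c : Module.Basis ι A C) (u : C →ₗ[A] B)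
    (h : ∀ i j, u (c i * c j) = u (c i) * u (c j)) (z w : C) : u (z * w) = u z * u w := by
  have := LinearMap.ext_basis c c (B := (LinearMap.mul A C).compr₂ u)
    (B' := (LinearMap.mul A B).compl₁₂ u u) (by simpa using h)
  simpa using LinearMap.congr_fun₂ this z w

end Basis

section Identity

variable {p : ℕ} {Bc : ℕ → ℕ → ℤ[X]}

/-- Over a field the identity holds because `X ↦ X ^ p / (p)_q` is a ring endomorphism of `K[X]`
carrying the model of the source onto the model of the target. -/
lemma mapMulCoeff_eq_mulMapCoeff_of_field {K : Type*} [Field K] (hB : IsDivFrobCoeff p Bc)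
    (hp : 0 < p) (q x : K) (hq : ∀ k, qFact q k ≠ 0) (hqp : ∀ k, qFact (q ^ p) k ≠ 0)
    (hpq : qInt q p ≠ 0) (m n : ℕ) {k : ℕ} (hk : k < p * (m + n) + 1) :
    mapMulCoeff (q ^ p) ((1 - q) * x ^ p) (divFrobEntry p Bc q x) m n k =
      mulMapCoeff q ((1 - q) * x) p (divFrobEntry p Bc q x) m n k := by
  set φ : K[X] →ₐ[K] K[X] := aeval (C (qInt q p)⁻¹ * X ^ p)
  set γ := dpModel (q ^ p) (x ^ p / qInt q p)
  have hφ : ∀ a, φ (γ a) = ∑ k ∈ range (p * a + 1), divFrobEntry p Bc q x a k • dpModel q x k :=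
    fun a => aeval_dpModel_frob q x hB hq hpq (hqp a)
  have hγ : ∀ m n, γ m * γ n = ∑ r ∈ range (min m n + 1),
      dpCoeff (q ^ p) ((1 - q) * x ^ p) m n r • γ (m + n - r) := by
    intro m n
    rw [dpModel_mul _ _ hqp, ← one_sub_mul_qInt, mul_assoc, mul_div_cancel₀ _ hpq]
  have hzero : ∑ k ∈ range (p * (m + n) + 1),
      (mapMulCoeff (q ^ p) ((1 - q) * x ^ p) (divFrobEntry p Bc q x) m n k -
        mulMapCoeff q ((1 - q) * x) p (divFrobEntry p Bc q x) m n k) • dpModel q x k = 0 := by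
    simp only [sub_smul, sum_sub_distrib, sub_eq_zero]
    rw [← sum_dpCoeff_smul_sum_eq _ _ _ _ _ (fun a k => divFrobEntry_eq_zero_of_gt hB hp q x),
      ← sum_smul_mul_sum_smul _ _ _ _ (dpModel_mul q x hq), ← hφ, ← hφ,
      ← map_mul, hγ, map_sum]
    exact sum_congr rfl fun r _ => by rw [map_smul, hφ]
  exact sub_eq_zero.1 (eq_zero_of_sum_smul_dpModel_eq_zero hq hzero k hk)

/-- Both sides are integer polynomials in `q` and `x`, so it suffices to take for `q`, `x` the
variables `t`, `X` of `ℤ[t][X]`, and then to compute in its fraction field. -/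
lemma mapMulCoeff_eq_mulMapCoeff {A : Type*} [CommRing A] (hB : IsDivFrobCoeff p Bc) (hp : 0 < p)
    (q x : A) (m n : ℕ) {k : ℕ} (hk : k < p * (m + n) + 1) :
    mapMulCoeff (q ^ p) ((1 - q) * x ^ p) (divFrobEntry p Bc q x) m n k =
      mulMapCoeff q ((1 - q) * x) p (divFrobEntry p Bc q x) m n k := by
  have huniv : mapMulCoeff ((C X : ℤ[X][X]) ^ p) ((1 - C X) * X ^ p) (divFrobEntry p Bc (C X) X)
      m n k = mulMapCoeff (C X : ℤ[X][X]) ((1 - C X) * X) p (divFrobEntry p Bc (C X) X) m n k := by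
    set ι := algebraMap ℤ[X][X] (FractionRing ℤ[X][X])
    have hι : Function.Injective (ι.comp C) :=
      (IsFractionRing.injective ℤ[X][X] _).comp (C_injective)
    apply IsFractionRing.injective ℤ[X][X] (FractionRing ℤ[X][X])
    simp only [map_mapMulCoeff, map_mulMapCoeff, map_divFrobEntry, map_pow, map_mul, map_sub,
      map_one]
    exact mapMulCoeff_eq_mulMapCoeff_of_field hB hp (ι (C X)) (ι X)
      (fun k => by simpa using qFact_map_X_pow_ne_zero hι 1 k) (qFact_map_X_pow_ne_zero hι p)
      (qInt_map_X_ne_zero hι hp) m n hk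
  set ψ : ℤ[X][X] →+* A := eval₂RingHom (aeval q).toRingHom x
  have hψq : ψ (C X) = q := by simp [ψ]
  have hψx : ψ X = x := by simp [ψ]
  simpa [map_mapMulCoeff, map_mulMapCoeff, map_divFrobEntry, hψq, hψx] using congrArg ψ huniv

end Identity

/-- Let `y := (1−q)x`, let `C = A⟨ω⟩_{q^p,(1−q)x^p}` (basis `c`) and `B = A⟨ξ⟩_{q,y}`
(basis `b`) be twisted divided power polynomial rings, and let `Bc n i` be the divided
`p`-Frobenius coefficients, i.e. `(i)_t! A_{n,i} = (n)_{t^p}! (p)_t^n Bc n i`. Then the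
`A`-linear map `ω^{[n]} ↦ Σ_{i=n}^{pn} B_{n,i}(q) x^{pn−i} ξ^{[i]}` is a homomorphism of
rings (a morphism of `A`-algebras), the divided `p`-Frobenius map. -/
theorem statement19 {R A B C : Type*} [CommRing R] [CommRing A] [Algebra R A]
    [CommRing B] [Algebra A B] [CommRing C] [Algebra A C]
    (q : R) (x : A) (p : ℕ) (hp : 1 ≤ p)
    (Bc : ℕ → ℕ → Polynomial ℤ)
    (hBc : ∀ n i : ℕ,
      qFact (Polynomial.X : Polynomial ℤ) i * frobCoeff p n i =
        qFact ((Polynomial.X : Polynomial ℤ) ^ p) n *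
          (qInt (Polynomial.X : Polynomial ℤ) p) ^ n * Bc n i)
    (b : Module.Basis ℕ A B)
    (hb : ∀ m n : ℕ, b m * b n = ∑ i ∈ Finset.range (min m n + 1),
      dpCoeff (algebraMap R A q) ((1 - algebraMap R A q) * x) m n i • b (m + n - i))
    (c : Module.Basis ℕ A C)
    (hc : ∀ m n : ℕ, c m * c n = ∑ i ∈ Finset.range (min m n + 1),
      dpCoeff ((algebraMap R A q) ^ p) ((1 - algebraMap R A q) * x ^ p) m n i • c (m + n - i)) :
    ∃ u : C →ₐ[A] B,
      ∀ n : ℕ, u (c n) = ∑ i ∈ Finset.Icc n (p * n),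
        (Polynomial.aeval (algebraMap R A q) (Bc n i) * x ^ (p * n - i)) • b i := by
  have hB : IsDivFrobCoeff p Bc := hBc
  set Q := algebraMap R A q
  set F : ℕ → B := fun n => ∑ i ∈ Icc n (p * n), (aeval Q (Bc n i) * x ^ (p * n - i)) • b i
  set u : C →ₗ[A] B := c.constr A F
  have hu : ∀ n, u (c n) = ∑ i ∈ range (p * n + 1), divFrobEntry p Bc Q x n i • b i := fun n => by
    refine (c.constr_basis A F n).trans (sum_subset (fun i hi => ?_) fun i hi hi' => ?_)
    · simp at hi ⊢
      omega
    · rw [hB.eq_zero_of_lt hp (by simp at hi hi'; omega), map_zero, zero_mul, zero_smul]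
  have hmul : ∀ m n, u (c m * c n) = u (c m) * u (c n) := fun m n => calc
    u (c m * c n) = ∑ r ∈ range (min m n + 1),
        dpCoeff (Q ^ p) ((1 - Q) * x ^ p) m n r • u (c (m + n - r)) := by
      simp only [hc, map_sum, map_smul]
    _ = ∑ k ∈ range (p * (m + n) + 1),
        mapMulCoeff (Q ^ p) ((1 - Q) * x ^ p) (divFrobEntry p Bc Q x) m n k • b k := by
      simp only [hu]
      exact sum_dpCoeff_smul_sum_eq _ _ _ _ b (fun a k => divFrobEntry_eq_zero_of_gt hB hp Q x) m n
    _ = ∑ k ∈ range (p * (m + n) + 1),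
        mulMapCoeff Q ((1 - Q) * x) p (divFrobEntry p Bc Q x) m n k • b k :=
      sum_congr rfl fun k hk => by rw [mapMulCoeff_eq_mulMapCoeff hB hp Q x m n (mem_range.1 hk)]
    _ = u (c m) * u (c n) := by rw [hu, hu, sum_smul_mul_sum_smul _ _ _ _ hb]
  have hone : u 1 = 1 := by
    rw [← basis_zero_eq_one_of_dpCoeff c _ _ hc, hu, ← basis_zero_eq_one_of_dpCoeff b _ _ hb]
    simp [divFrobEntry, hB.zero_zero]
  exact ⟨AlgHom.ofLinearMap u hone (map_mul_of_basis c u hmul), c.constr_basis A F⟩
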